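/- For a zero-field tree Ising model with root r and leaf set L, the configuration (x_r = 1, x_L = 1) achieves the maximum of |P(x_r | x_L) − P(x_r)| over all choices of x_r ∈ {−1,1} and x_L ∈ {−1,1}^L, assuming all edge parameters are positive. -/

import Mathlib

/-!
Flipping every spin preserves the Ising weight, so `P(X_r = 1) = 1/2` and `P(X_r = b | X_L = y)`
is governed by the ratio of the partition sums `Z(b, y)` clamped at `X_r = b`, `X_L = y`. For
nonnegative couplings the weight is log-supermodular on the lattice of configurations
(`ab + cd ≤ (a ⊓ b)(c ⊓ d) + (a ⊔ b)(c ⊔ d)` for spins), so the Ahlswede–Daykin four functions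
theorem gives `Z(+, y) Z(−, +) ≤ Z(−, y) Z(+, +)`; together with its image under the flip this
says the root's odds are nowhere more biased than under the all-plus boundary.
-/

/-- Spin value of a Boolean configuration entry: `true ↦ +1`, `false ↦ −1`. -/
noncomputable def val (b : Bool) : ℝ := if b then 1 else -1

/-- Unnormalized Ising weight `∏_{edges {u,v}} exp(θ_{uv} x_u x_v)` of a configuration. -/
noncomputable def isingWeight {V : Type*} [Fintype V] [LinearOrder V]
    (G : SimpleGraph V) [DecidableRel G.Adj] (θ : V → V → ℝ) (σ : V → Bool) : ℝ :=
  ∏ p ∈ Finset.univ.filter (fun p : V × V => p.1 < p.2 ∧ G.Adj p.1 p.2),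
    Real.exp (θ p.1 p.2 * val (σ p.1) * val (σ p.2))

/-- Conditional probability `P(X_r = b | X_L = y|_L)` in the Ising model on `G`. -/
noncomputable def condRootProb {V : Type*} [Fintype V] [LinearOrder V]
    (G : SimpleGraph V) [DecidableRel G.Adj] (θ : V → V → ℝ)
    (r : V) (L : Finset V) (b : Bool) (y : V → Bool) : ℝ :=
  (∑ σ : V → Bool, if (∀ v ∈ L, σ v = y v) ∧ σ r = b then isingWeight G θ σ else 0) /
    (∑ σ : V → Bool, if ∀ v ∈ L, σ v = y v then isingWeight G θ σ else 0)

/-- Marginal probability `P(X_r = b)` in the Ising model on `G`. -/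
noncomputable def rootMarg {V : Type*} [Fintype V] [LinearOrder V]
    (G : SimpleGraph V) [DecidableRel G.Adj] (θ : V → V → ℝ) (r : V) (b : Bool) : ℝ :=
  (∑ σ : V → Bool, if σ r = b then isingWeight G θ σ else 0) /
    (∑ σ : V → Bool, isingWeight G θ σ)

section IsingWeight

variable {V : Type*} [Fintype V] [LinearOrder V] (G : SimpleGraph V) [DecidableRel G.Adj]
  (θ : V → V → ℝ)

lemma isingWeight_pos (σ : V → Bool) : 0 < isingWeight G θ σ :=
  Finset.prod_pos fun _ _ => Real.exp_pos _

lemma isingWeight_compl (σ : V → Bool) : isingWeight G θ σᶜ = isingWeight G θ σ := by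
  refine Finset.prod_congr rfl fun p _ => ?_
  cases h₁ : σ p.1 <;> cases h₂ : σ p.2 <;> simp [val, h₁, h₂]

lemma val_mul_add_val_mul_le (a b c d : Bool) :
    val a * val c + val b * val d ≤ val (a ⊓ b) * val (c ⊓ d) + val (a ⊔ b) * val (c ⊔ d) := by
  cases a <;> cases b <;> cases c <;> cases d <;> norm_num [val]

lemma isingWeight_mul_le_inf_mul_sup (hθ : ∀ i j, G.Adj i j → 0 ≤ θ i j) (σ τ : V → Bool) :
    isingWeight G θ σ * isingWeight G θ τ ≤
      isingWeight G θ (σ ⊓ τ) * isingWeight G θ (σ ⊔ τ) := by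
  simp only [isingWeight, ← Finset.prod_mul_distrib, ← Real.exp_add]
  refine Finset.prod_le_prod (fun _ _ => (Real.exp_pos _).le) fun p hp => Real.exp_le_exp.2 ?_
  have := mul_le_mul_of_nonneg_left (val_mul_add_val_mul_le (σ p.1) (τ p.1) (σ p.2) (τ p.2))
    (hθ _ _ (Finset.mem_filter.1 hp).2.2)
  simp only [Pi.inf_apply, Pi.sup_apply]
  linarith

end IsingWeight

lemma abs_div_add_sub_half_le {a c A C : ℝ} (ha : 0 < a) (hc : 0 < c) (hA : 0 < A) (hC : 0 < C)
    (h₁ : a * C ≤ c * A) (h₂ : c * C ≤ a * A) :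
    |a / (a + c) - 1 / 2| ≤ |A / (A + C) - 1 / 2| := by
  have hform : ∀ x z : ℝ, 0 < x → 0 < z → |x / (x + z) - 1 / 2| = |x - z| / (2 * (x + z)) := by
    intro x z hx hz
    rw [show x / (x + z) - 1 / 2 = (x - z) / (2 * (x + z)) by field_simp; ring, abs_div,
      abs_of_pos (by positivity : 0 < 2 * (x + z))]
  rw [hform a c ha hc, hform A C hA hC, div_le_div_iff₀ (by positivity) (by positivity)]
  rcases abs_cases (a - c) with ⟨h, _⟩ | ⟨h, _⟩ <;>
    rw [h, abs_of_nonneg (by nlinarith : 0 ≤ A - C)] <;> nlinarith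

section ClampedSum

variable {V : Type*} [Fintype V] [DecidableEq V] (w : (V → Bool) → ℝ) (L : Finset V) (r : V)

def clampedSum (y : V → Bool) (b : Bool) : ℝ :=
  ∑ σ with (∀ v ∈ L, σ v = y v) ∧ σ r = b, w σ

lemma sum_ite_eq_clampedSum (y : V → Bool) (b : Bool) :
    (∑ σ : V → Bool, if (∀ v ∈ L, σ v = y v) ∧ σ r = b then w σ else 0) =
      clampedSum w L r y b :=
  (Finset.sum_filter _ _).symm

lemma sum_ite_eq_clampedSum_add (y : V → Bool) :
    (∑ σ : V → Bool, if ∀ v ∈ L, σ v = y v then w σ else 0) =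
      clampedSum w L r y true + clampedSum w L r y false := by
  rw [← sum_ite_eq_clampedSum, ← sum_ite_eq_clampedSum, ← Finset.sum_add_distrib]
  refine Finset.sum_congr rfl fun σ _ => ?_
  cases σ r <;> split_ifs <;> simp_all

lemma clampedSum_empty (y y' : V → Bool) (b : Bool) :
    clampedSum w ∅ r y b = clampedSum w ∅ r y' b := by
  simp [clampedSum]

lemma clampedSum_pos (hw : ∀ σ, 0 < w σ) (hr : r ∉ L) (y : V → Bool) (b : Bool) :
    0 < clampedSum w L r y b :=
  Finset.sum_pos (fun σ _ => hw σ)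
    ⟨Function.update y r b, Finset.mem_filter.2 ⟨Finset.mem_univ _,
      fun _ hv => Function.update_of_ne (ne_of_mem_of_not_mem hv hr) _ _, Function.update_self ..⟩⟩

lemma clampedSum_compl (hw : ∀ σ, w σᶜ = w σ) (y : V → Bool) (b : Bool) :
    clampedSum w L r yᶜ (!b) = clampedSum w L r y b := by
  rw [clampedSum, Finset.sum_filter, ← Equiv.sum_comp (compl_involutive.toPerm _), clampedSum,
    Finset.sum_filter]
  refine Finset.sum_congr rfl fun σ _ => ?_
  simp [hw]

lemma clampedSum_mul_le (hw : ∀ σ, 0 ≤ w σ) (hsup : ∀ σ τ, w σ * w τ ≤ w (σ ⊓ τ) * w (σ ⊔ τ))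
    (y : V → Bool) :
    clampedSum w L r y true * clampedSum w L r ⊤ false ≤
      clampedSum w L r y false * clampedSum w L r ⊤ true := by
  refine (four_functions_theorem w w w w hw hw hw hw hsup _ _).trans
    (mul_le_mul (Finset.sum_le_sum_of_subset_of_nonneg ?_ fun σ _ _ => hw σ)
      (Finset.sum_le_sum_of_subset_of_nonneg ?_ fun σ _ _ => hw σ)
      (Finset.sum_nonneg fun σ _ => hw σ) (Finset.sum_nonneg fun σ _ => hw σ))
  · intro σ hσ
    obtain ⟨a, ha, c, hc, rfl⟩ := Finset.mem_infs.1 hσ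
    simp only [Finset.mem_filter, Finset.mem_univ, true_and, Pi.top_apply] at ha hc ⊢
    exact ⟨fun v hv => by simp [ha.1 v hv, hc.1 v hv], by simp [ha.2, hc.2]⟩
  · intro σ hσ
    obtain ⟨a, ha, c, hc, rfl⟩ := Finset.mem_sups.1 hσ
    simp only [Finset.mem_filter, Finset.mem_univ, true_and, Pi.top_apply] at ha hc ⊢
    exact ⟨fun v hv => by simp [hc.1 v hv], by simp [ha.2]⟩

lemma clampedSum_div_eq_half (hw : ∀ σ, 0 < w σ) (hcompl : ∀ σ, w σᶜ = w σ) (y : V → Bool)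
    (b : Bool) :
    clampedSum w ∅ r y b / (clampedSum w ∅ r y true + clampedSum w ∅ r y false) = 1 / 2 := by
  have hpos := clampedSum_pos w ∅ r hw (Finset.notMem_empty r) y
  have h : clampedSum w ∅ r y true = clampedSum w ∅ r y false := by
    rw [← clampedSum_compl w ∅ r hcompl y false, clampedSum_empty w r yᶜ y]
    rfl
  have := hpos false
  cases b <;> rw [h] <;> field_simp <;> ring

variable {w L r} in
lemma abs_clampedSum_div_sub_half_le (hw : ∀ σ, 0 < w σ) (hcompl : ∀ σ, w σᶜ = w σ)
    (hsup : ∀ σ τ, w σ * w τ ≤ w (σ ⊓ τ) * w (σ ⊔ τ)) (hr : r ∉ L) (y : V → Bool) (b : Bool) :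
    |clampedSum w L r y b / (clampedSum w L r y true + clampedSum w L r y false) - 1 / 2| ≤
      |clampedSum w L r ⊤ true / (clampedSum w L r ⊤ true + clampedSum w L r ⊤ false) - 1 / 2| := by
  have hpos := clampedSum_pos w L r hw hr
  have h₁ := clampedSum_mul_le w L r (fun σ => (hw σ).le) hsup y
  have h₂ := clampedSum_mul_le w L r (fun σ => (hw σ).le) hsup yᶜ
  have hflip : ∀ c, clampedSum w L r yᶜ c = clampedSum w L r y (!c) := fun c => by
    simpa using clampedSum_compl w L r hcompl y (!c)
  simp only [hflip, Bool.not_true, Bool.not_false] at h₂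
  cases b
  · rw [add_comm]
    exact abs_div_add_sub_half_le (hpos _ _) (hpos _ _) (hpos _ _) (hpos _ _) h₂ h₁
  · exact abs_div_add_sub_half_le (hpos _ _) (hpos _ _) (hpos _ _) (hpos _ _) h₁ h₂

end ClampedSum

lemma rootMarg_eq_half {V : Type*} [Fintype V] [LinearOrder V] (G : SimpleGraph V)
    [DecidableRel G.Adj] (θ : V → V → ℝ) (r : V) (b : Bool) : rootMarg G θ r b = 1 / 2 := by
  have := clampedSum_div_eq_half (isingWeight G θ) r (isingWeight_pos G θ) (isingWeight_compl G θ)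
    ⊤ b
  rw [← sum_ite_eq_clampedSum, ← sum_ite_eq_clampedSum_add] at this
  simpa [rootMarg] using this

theorem stmt_8_general {V : Type*} [Fintype V] [LinearOrder V]
    (G : SimpleGraph V) [DecidableRel G.Adj]
    (r : V) (L : Finset V) (hL : ∀ v, v ∈ L ↔ v ≠ r ∧ G.degree v = 1)
    (θ : V → V → ℝ) (hθ : ∀ i j, G.Adj i j → 0 < θ i j) :
    ∀ (b : Bool) (y : V → Bool),
      |condRootProb G θ r L b y - rootMarg G θ r b| ≤
        |condRootProb G θ r L true (fun _ => true) - rootMarg G θ r true| := by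
  intro b y
  have hr : r ∉ L := fun h => ((hL r).1 h).1 rfl
  have hsup := isingWeight_mul_le_inf_mul_sup G θ fun i j h => (hθ i j h).le
  rw [rootMarg_eq_half, rootMarg_eq_half, condRootProb, condRootProb, sum_ite_eq_clampedSum_add,
    sum_ite_eq_clampedSum_add, sum_ite_eq_clampedSum, sum_ite_eq_clampedSum]
  exact abs_clampedSum_div_sub_half_le (isingWeight_pos G θ) (isingWeight_compl G θ) hsup hr y b

/-- For a zero-field tree Ising model with root `r`, leaf set `L`, and all positive edge
parameters, the configuration `(x_r = 1, x_L = 1)` maximizes `|P(x_r | x_L) − P(x_r)|` over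
all `x_r ∈ {−1,1}` and `x_L ∈ {−1,1}^L`. -/
theorem stmt_8 {V : Type*} [Fintype V] [LinearOrder V]
    (G : SimpleGraph V) [DecidableRel G.Adj] (hT : G.IsTree)
    (r : V) (L : Finset V) (hL : ∀ v, v ∈ L ↔ v ≠ r ∧ G.degree v = 1)
    (θ : V → V → ℝ) (hθ : ∀ i j, G.Adj i j → 0 < θ i j) :
    ∀ (b : Bool) (y : V → Bool),
      |condRootProb G θ r L b y - rootMarg G θ r b| ≤
        |condRootProb G θ r L true (fun _ => true) - rootMarg G θ r true| :=
  stmt_8_general G r L hL θ hθ
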